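/- Let r ≥ 4 and m ≥ 2r + 1, and let T ⊆ {1,…,m−1} with #T = r be admissible. Then the 2^r subset sums of T represent at least 2r + 1 distinct residue classes mod m. -/

import Mathlib

/-- A finite set `T ⊆ {1,…,m−1}` is admissible if no nonempty subset has sum divisible
by `m`. -/
def Admissible (m : ℕ) (T : Finset ℕ) : Prop :=
  T ⊆ Finset.Icc 1 (m - 1) ∧ ∀ U ⊆ T, U.Nonempty → ¬ m ∣ U.sum id

/-- The diversity: the number of residue classes mod `m` represented by subset sums. -/
def diversity (m : ℕ) (T : Finset ℕ) : ℕ :=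
  (T.powerset.image (fun U => U.sum id % m)).card

/-! Work in the cyclic group `ZMod m`; let `s = ∑ T` and `A = {0} ∪ T`. The sums of the subsets
of size `0`, `1`, `r - 1`, `r` form `A ∪ (s - A)`. Zero-sum-freeness puts every `x ∈ A ∩ (s - A)`
in `T` with `2x = s`, and a cyclic group has at most two such `x`; so these are `2r` distinct
sums, and `2r + 1` unless `2a = 2b = s` for some `a ≠ b` in `T`. In that case, if every pair sum
of `T` were one of them, then `a + e ∈ T` or `2e = a` for each `e ∈ T \ {a}`, and starting from
`b` this forces `b + i • a ∈ T` for every `i`: the obstructions would make a small multiple of `a`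
vanish, impossible since two of the points `b + i • a` already in `T` would then sum to `0`.
The same fact makes `b, b + a, …, b + r • a` distinct, too many for `T`; so some pair sum is a
`(2r + 1)`-st value. -/

open Finset

section AddCommMonoid

variable {M : Type*} [AddCommMonoid M] {T : Finset M}

def ZeroSumFree (T : Finset M) : Prop :=
  ∀ U ⊆ T, U.Nonempty → ∑ x ∈ U, x ≠ 0

def subsetSums [DecidableEq M] (T : Finset M) : Finset M :=
  T.powerset.image fun U => ∑ x ∈ U, x

theorem sum_mem_subsetSums [DecidableEq M] {U : Finset M} (hU : U ⊆ T) :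
    ∑ x ∈ U, x ∈ subsetSums T :=
  mem_image_of_mem _ (mem_powerset.2 hU)

theorem ZeroSumFree.ne_zero (hT : ZeroSumFree T) {t : M} (ht : t ∈ T) : t ≠ 0 := by
  simpa using hT {t} (singleton_subset_iff.2 ht) (singleton_nonempty t)

end AddCommMonoid

section AddCommGroup

variable {G : Type*} [AddCommGroup G] [DecidableEq G] {T : Finset G}

/-- The sums of the subsets of `T` of size `0`, `1`, `#T - 1` and `#T`. -/
def extremeSums (T : Finset G) : Finset G :=
  insert 0 T ∪ (insert 0 T).image (∑ x ∈ T, x - ·)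

theorem mem_extremeSums {x : G} :
    x ∈ extremeSums T ↔ x = 0 ∨ x ∈ T ∨ x = ∑ y ∈ T, y ∨ ∃ t ∈ T, x = ∑ y ∈ T, y - t := by
  simp only [extremeSums, mem_union, mem_insert, mem_image, exists_eq_or_imp, sub_zero]
  grind

theorem extremeSums_subset_subsetSums : extremeSums T ⊆ subsetSums T := by
  intro x hx
  rcases mem_extremeSums.1 hx with rfl | hx | rfl | ⟨t, ht, rfl⟩
  · simpa using sum_mem_subsetSums (empty_subset T)
  · simpa using sum_mem_subsetSums (singleton_subset_iff.2 hx)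
  · exact sum_mem_subsetSums Subset.rfl
  · simpa [sum_erase_eq_sub ht] using sum_mem_subsetSums (erase_subset t T)

theorem card_filter_add_self_eq_le_two [Fintype G] [IsAddCyclic G] (T : Finset G) (s : G) :
    #{x ∈ T | x + x = s} ≤ 2 := by
  rcases (T.filter fun x => x + x = s).eq_empty_or_nonempty with hempty | ⟨x₀, hx₀⟩
  · simp [hempty]
  have hsub : (T.filter (fun x => x + x = s)).image (· - x₀) ⊆ ({y | 2 • y = 0} : Finset G) := by
    intro y hy
    obtain ⟨x, hx, rfl⟩ := mem_image.1 hy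
    have h₀ := (mem_filter.1 hx₀).2
    have h := (mem_filter.1 hx).2
    simp only [mem_filter, mem_univ, true_and, two_nsmul]
    rw [sub_add_sub_comm, h, h₀, sub_self]
  calc #{x ∈ T | x + x = s}
      = #((T.filter (fun x => x + x = s)).image (· - x₀)) :=
        (card_image_of_injective _ sub_left_injective).symm
    _ ≤ #({y | 2 • y = 0} : Finset G) := card_le_card hsub
    _ ≤ 2 := IsAddCyclic.card_nsmul_eq_zero_le two_pos

namespace ZeroSumFree

variable {a b : G}

theorem add_ne_zero (hT : ZeroSumFree T) {u v : G} (hu : u ∈ T) (hv : v ∈ T) (huv : u ≠ v) :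
    u + v ≠ 0 := by
  simpa [sum_pair huv] using
    hT {u, v} (insert_subset hu (singleton_subset_iff.2 hv)) (insert_nonempty _ _)

theorem sum_sub_sum_ne_zero (hT : ZeroSumFree T) {V : Finset G} (hV : V ⊆ T) (hVT : #V < #T) :
    ∑ x ∈ T, x - ∑ x ∈ V, x ≠ 0 := by
  rw [← sum_sdiff_eq_sub hV]
  exact hT _ sdiff_subset (sdiff_nonempty.2 fun hTV => (card_le_card hTV).not_gt hVT)

theorem sum_sub_ne_zero (hT : ZeroSumFree T) (hT2 : 2 ≤ #T) {t : G} (ht : t ∈ T) :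
    ∑ x ∈ T, x - t ≠ 0 := by
  simpa using hT.sum_sub_sum_ne_zero (singleton_subset_iff.2 ht) (by simp; omega)

theorem sum_sub_sub_ne_zero (hT : ZeroSumFree T) (hT3 : 3 ≤ #T) {u v : G} (hu : u ∈ T)
    (hv : v ∈ T) (huv : u ≠ v) : ∑ x ∈ T, x - u - v ≠ 0 := by
  have hcard : #{u, v} < #T := card_le_two.trans_lt (by omega)
  simpa [sum_pair huv, sub_sub] using
    hT.sum_sub_sum_ne_zero (insert_subset hu (singleton_subset_iff.2 hv)) hcard

theorem sum_sub_sub_sub_ne_zero (hT : ZeroSumFree T) (hT4 : 4 ≤ #T) {u v w : G} (hu : u ∈ T)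
    (hv : v ∈ T) (hw : w ∈ T) (huv : u ≠ v) (huw : u ≠ w) (hvw : v ≠ w) :
    ∑ x ∈ T, x - u - v - w ≠ 0 := by
  have hcard : #{u, v, w} < #T := card_le_three.trans_lt (by omega)
  have hsub : {u, v, w} ⊆ T := insert_subset hu (insert_subset hv (singleton_subset_iff.2 hw))
  simpa [sum_insert, huv, huw, hvw, sub_sub, add_assoc] using hT.sum_sub_sum_ne_zero hsub hcard

theorem inter_subset_filter_add_self_eq (hT : ZeroSumFree T) (hT3 : 3 ≤ #T) :
    insert 0 T ∩ (insert 0 T).image (∑ y ∈ T, y - ·) ⊆ {x ∈ T | x + x = ∑ y ∈ T, y} := by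
  intro x hx
  obtain ⟨hxA, hxB⟩ := mem_inter.1 hx
  obtain ⟨y, hyA, rfl⟩ := mem_image.1 hxB
  have hT0 : ∑ y ∈ T, y ≠ 0 := hT T Subset.rfl (card_pos.1 (by omega))
  rcases mem_insert.1 hyA with rfl | hy <;> rcases mem_insert.1 hxA with hx0 | hx
  · exact absurd (by simpa using hx0) hT0
  · exact absurd (sub_self _) (hT.sum_sub_ne_zero (by omega) (by simpa using hx))
  · exact absurd hx0 (hT.sum_sub_ne_zero (by omega) hy)
  · by_cases hxy : ∑ z ∈ T, z - y = y
    · exact mem_filter.2 ⟨hx, by rw [hxy]; exact (sub_eq_iff_eq_add.1 hxy).symm⟩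
    · exact absurd (by abel) (hT.sum_sub_sub_ne_zero (by omega) hx hy hxy)

theorem two_mul_card_add_two_le (hT : ZeroSumFree T) (hT3 : 3 ≤ #T) :
    2 * #T + 2 ≤ #(extremeSums T) + #{x ∈ T | x + x = ∑ y ∈ T, y} := by
  have hA : #(insert 0 T) = #T + 1 := card_insert_of_notMem fun h => hT.ne_zero h rfl
  have hB : #((insert 0 T).image (∑ y ∈ T, y - ·)) = #T + 1 := by
    rw [card_image_of_injective _ sub_right_injective, hA]
  have hunion := card_union_add_card_inter (insert 0 T) ((insert 0 T).image (∑ y ∈ T, y - ·))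
  have hinter := card_le_card (hT.inter_subset_filter_add_self_eq hT3)
  rw [extremeSums]
  omega

theorem add_mem_or_add_self_eq (hT : ZeroSumFree T) (hT4 : 4 ≤ #T) (ha : a ∈ T) (hb : b ∈ T)
    (has : a + a = ∑ x ∈ T, x) (hbs : b + b = ∑ x ∈ T, x) {e : G} (he : e ∈ T) (hea : e ≠ a)
    (hae : a + e ∈ extremeSums T) : a + e ∈ T ∨ e + e = a := by
  rcases mem_extremeSums.1 hae with h0 | hmem | hs | ⟨t, ht, hts⟩
  · exact absurd h0 (hT.add_ne_zero ha he hea.symm)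
  · exact Or.inl hmem
  · exact absurd (add_left_cancel (hs.trans has.symm)) hea
  · by_cases hta : t = a
    · subst hta
      exact absurd (by rw [← has] at hts; simpa using hts) (hT.ne_zero he)
    by_cases htb : t = b
    · subst htb
      rw [← hbs, add_sub_cancel_right] at hts
      exact Or.inl (hts ▸ hb)
    by_cases hte : t = e
    · subst hte
      right
      rw [← has] at hts
      exact add_left_cancel (by rw [← add_assoc, hts]; abel)
    · refine absurd ?_ (hT.sum_sub_sub_sub_ne_zero hT4 ha he ht (Ne.symm hea) (Ne.symm hta)
        (Ne.symm hte))
      rw [sub_sub, sub_sub, ← add_assoc, hts]; abel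

theorem nsmul_ne_zero_of_add_nsmul_mem (hT : ZeroSumFree T) (ha : a ∈ T)
    (has : a + a = ∑ x ∈ T, x) (hbs : b + b = ∑ x ∈ T, x) {J : ℕ}
    (hrails : ∀ i ≤ J, b + i • a ∈ T) {k : ℕ} (hk0 : 0 < k) (hk : k ≤ 2 * J + 1) :
    k • a ≠ 0 := by
  intro hka
  have hdk : addOrderOf a ≤ k := addOrderOf_le_of_nsmul_eq_zero hk0 hka
  have hd0 : 0 < addOrderOf a :=
    addOrderOf_pos_iff.2 (isOfFinAddOrder_iff_nsmul_eq_zero.2 ⟨k, hk0, hka⟩)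
  have hda : addOrderOf a • a = 0 := addOrderOf_nsmul_eq_zero a
  rcases (by omega : addOrderOf a = 1 ∨ addOrderOf a = 2 ∨ 3 ≤ addOrderOf a) with h1 | h2 | h3
  · exact hT.ne_zero ha (by simpa [h1] using hda)
  · exact hT T Subset.rfl ⟨a, ha⟩ (by rw [← has, ← two_nsmul, ← h2, hda])
  obtain ⟨i, j, hij, hjJ, hd⟩ : ∃ i j, i < j ∧ j ≤ J ∧ addOrderOf a = i + j + 2 :=
    ⟨addOrderOf a - 2 - min J (addOrderOf a - 2), min J (addOrderOf a - 2), by omega, by omega,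
      by omega⟩
  have hne : b + i • a ≠ b + j • a := fun h =>
    nsmul_ne_zero_of_lt_addOrderOf (x := a) (by omega : j - i ≠ 0) (by omega)
      (by rw [sub_nsmul _ hij.le, add_left_cancel h, add_neg_cancel])
  refine hT.add_ne_zero (hrails i (by omega)) (hrails j hjJ) hne ?_
  calc (b + i • a) + (b + j • a) = (b + b) + (i + j) • a := by rw [add_nsmul]; abel
    _ = addOrderOf a • a := by
      rw [hbs, ← has, hd]; simp only [add_nsmul, two_nsmul]; abel
    _ = 0 := hda

theorem add_nsmul_mem (hT : ZeroSumFree T) (hT4 : 4 ≤ #T) (ha : a ∈ T) (hb : b ∈ T) (hab : a ≠ b)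
    (has : a + a = ∑ x ∈ T, x) (hbs : b + b = ∑ x ∈ T, x)
    (hclosed : ∀ e ∈ T, e ≠ a → a + e ∈ extremeSums T) (J : ℕ) : ∀ i ≤ J, b + i • a ∈ T := by
  induction J with
  | zero => intro i hi; simpa [Nat.le_zero.1 hi] using hb
  | succ J ih =>
    intro i hi
    rcases Nat.lt_or_eq_of_le hi with hi | rfl
    · exact ih i (by omega)
    have hne0 : ∀ k, 0 < k → k ≤ 2 * J + 1 → k • a ≠ 0 := fun k hk0 hk =>
      hT.nsmul_ne_zero_of_add_nsmul_mem ha has hbs ih hk0 hk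
    have hdouble : (b + J • a) + (b + J • a) = a + (2 * J + 1) • a := by
      rw [succ_nsmul, two_mul, add_nsmul]
      calc (b + J • a) + (b + J • a) = (b + b) + (J • a + J • a) := by abel
        _ = a + (J • a + J • a + a) := by rw [hbs, ← has]; abel
    have hea : b + J • a ≠ a := by
      intro h
      rcases Nat.eq_zero_or_pos J with rfl | hJ
      · simp only [zero_nsmul, add_zero] at h
        exact hab h.symm
      refine hne0 (2 * J) (by omega) (by omega) ?_
      rw [h, succ_nsmul] at hdouble
      exact add_eq_right.1 (add_left_cancel hdouble).symm
    have hee : (b + J • a) + (b + J • a) ≠ a := by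
      rw [hdouble]
      exact fun h => hne0 (2 * J + 1) (by omega) le_rfl (add_eq_left.1 h)
    have hrail := ih J le_rfl
    rcases hT.add_mem_or_add_self_eq hT4 ha hb has hbs hrail hea (hclosed _ hrail hea) with h | h
    · convert h using 1
      rw [succ_nsmul]; abel
    · exact absurd h hee

theorem exists_add_notMem_extremeSums (hT : ZeroSumFree T) (hT4 : 4 ≤ #T) (ha : a ∈ T)
    (hb : b ∈ T) (hab : a ≠ b) (has : a + a = ∑ x ∈ T, x) (hbs : b + b = ∑ x ∈ T, x) :
    ∃ u ∈ T, ∃ v ∈ T, u ≠ v ∧ u + v ∉ extremeSums T := by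
  by_contra! hclosed
  have hrails := hT.add_nsmul_mem hT4 ha hb hab has hbs
    (fun e he hea => hclosed a ha e he hea.symm) #T
  have hne : ∀ i j, i < j → j ≤ #T → b + i • a ≠ b + j • a := fun i j hij hj h =>
    hT.nsmul_ne_zero_of_add_nsmul_mem ha has hbs hrails (k := j - i) (by omega) (by omega)
      (by rw [sub_nsmul _ hij.le, add_left_cancel h, add_neg_cancel])
  have hinj : Set.InjOn (b + · • a) (range (#T + 1) : Set ℕ) := by
    intro i hi j hj hij
    simp only [coe_range, Set.mem_Iio] at hi hj
    rcases lt_trichotomy i j with hlt | rfl | hgt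
    · exact absurd hij (hne i j hlt (by omega))
    · rfl
    · exact absurd hij.symm (hne j i hgt (by omega))
  have hsub : (range (#T + 1)).image (b + · • a) ⊆ T := by
    intro x hx
    obtain ⟨i, hi, rfl⟩ := mem_image.1 hx
    exact hrails i (Nat.lt_succ_iff.1 (mem_range.1 hi))
  have := card_le_card hsub
  rw [card_image_of_injOn hinj, card_range] at this
  omega

theorem two_mul_card_add_one_le_card_subsetSums [Fintype G] [IsAddCyclic G]
    (hT : ZeroSumFree T) (hT4 : 4 ≤ #T) : 2 * #T + 1 ≤ #(subsetSums T) := by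
  have hext := hT.two_mul_card_add_two_le (by omega)
  have hsub : extremeSums T ⊆ subsetSums T := extremeSums_subset_subsetSums
  have htwo := card_filter_add_self_eq_le_two T (∑ x ∈ T, x)
  by_cases hone : #{x ∈ T | x + x = ∑ y ∈ T, y} ≤ 1
  · have := card_le_card hsub
    omega
  obtain ⟨a, ha, b, hb, hab⟩ := one_lt_card.1 (not_le.1 hone)
  rw [mem_filter] at ha hb
  obtain ⟨u, hu, v, hv, huv, hout⟩ :=
    hT.exists_add_notMem_extremeSums hT4 ha.1 hb.1 hab ha.2 hb.2
  have hins : insert (u + v) (extremeSums T) ⊆ subsetSums T := by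
    refine insert_subset ?_ hsub
    simpa [sum_pair huv] using sum_mem_subsetSums (insert_subset hu (singleton_subset_iff.2 hv))
  have := card_le_card hins
  rw [card_insert_of_notMem hout] at this
  omega

end ZeroSumFree

end AddCommGroup

theorem exists_subset_image_natCast_sum {R : Type*} [AddCommMonoidWithOne R] [DecidableEq R]
    {T : Finset ℕ} (hinj : Set.InjOn (Nat.cast : ℕ → R) T) {U : Finset R}
    (hU : U ⊆ T.image Nat.cast) :
    ∃ V ⊆ T, V.image Nat.cast = U ∧ ∑ x ∈ U, x = ((∑ x ∈ V, x : ℕ) : R) := by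
  obtain ⟨V, hV, rfl⟩ := subset_image_iff.1 hU
  exact ⟨V, hV, rfl, by rw [sum_image (hinj.mono hV), Nat.cast_sum]⟩

namespace Admissible

variable {m : ℕ} {T : Finset ℕ}

theorem injOn_natCast (hT : Admissible m T) : Set.InjOn (Nat.cast : ℕ → ZMod m) T := by
  intro x hx y hy hxy
  have hx' := mem_Icc.1 (hT.1 hx)
  have hy' := mem_Icc.1 (hT.1 hy)
  rwa [ZMod.natCast_eq_natCast_iff', Nat.mod_eq_of_lt (by omega),
    Nat.mod_eq_of_lt (by omega)] at hxy

theorem zeroSumFree_image_natCast (hT : Admissible m T) :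
    ZeroSumFree (T.image (Nat.cast : ℕ → ZMod m)) := by
  intro U hU hUne
  obtain ⟨V, hV, rfl, hsum⟩ := exists_subset_image_natCast_sum hT.injOn_natCast hU
  rw [hsum, Ne, ZMod.natCast_eq_zero_iff]
  exact hT.2 V hV (image_nonempty.1 hUne)

end Admissible

theorem card_subsetSums_image_natCast_le_diversity {m : ℕ} {T : Finset ℕ}
    (hinj : Set.InjOn (Nat.cast : ℕ → ZMod m) T) :
    #(subsetSums (T.image (Nat.cast : ℕ → ZMod m))) ≤ diversity m T := by
  have hsub : subsetSums (T.image (Nat.cast : ℕ → ZMod m)) ⊆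
      (T.powerset.image fun U => U.sum id % m).image Nat.cast := by
    intro x hx
    obtain ⟨U, hU, rfl⟩ := mem_image.1 hx
    obtain ⟨V, hV, -, hsum⟩ := exists_subset_image_natCast_sum hinj (mem_powerset.1 hU)
    rw [hsum, ← ZMod.natCast_mod]
    exact mem_image_of_mem _ (mem_image_of_mem _ (mem_powerset.2 hV))
  exact (card_le_card hsub).trans card_image_le

/-- For `r ≥ 4`, `m ≥ 2r + 1`, an admissible `r`-element set `T ⊆ {1,…,m−1}` has
subset sums representing at least `2r + 1` residue classes mod `m`. -/
theorem stmt_19 (r m : ℕ) (hr : 4 ≤ r) (hm : 2 * r + 1 ≤ m)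
    (T : Finset ℕ) (hT : Admissible m T) (hcard : T.card = r) :
    2 * r + 1 ≤ diversity m T := by
  have : NeZero m := ⟨by omega⟩
  have hcard' : #(T.image (Nat.cast : ℕ → ZMod m)) = r := by
    rw [card_image_of_injOn hT.injOn_natCast, hcard]
  have hsums := hT.zeroSumFree_image_natCast.two_mul_card_add_one_le_card_subsetSums
    (hcard' ▸ hr)
  rw [hcard'] at hsums
  exact hsums.trans (card_subsetSums_image_natCast_le_diversity hT.injOn_natCast)
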